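/- arXiv:math/0403290 — 4 statements merged into one kernel-verified Lean document; each statement's English description precedes it below -/
import Mathlib

section
/- Let f : ℝ → ℂ be continuous and integrable with f̂ supported in [0, ∞). Then for y > 0 and x ∈ ℝ, ∫_0^∞ f̂(ξ) exp(2πi (x + iy) ξ) dξ = (P_y * f)(x), the Poisson integral of f; in particular the Abel mean of the inverse Fourier transform with parameter t = y agrees with this integral. -/
/-!
On `ξ > 0` the factor `exp (2πi(x + iy)ξ)` equals `g ξ = exp (2πixξ - 2πy|ξ|)`, and since `f̂`
vanishes on `ξ < 0` the integral may be taken over all of `ℝ`. The multiplication formula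
`∫ f̂ g = ∫ f ĝ` then moves the Fourier transform onto `g`, and `ĝ t` is the Poisson kernel
`P_y (x - t)` because `∫ exp (itξ - b|ξ|) dξ = 2b / (t² + b²)`.
-/

open Real MeasureTheory Complex Set FourierTransform

noncomputable def halfPlanePoissonKernel (y u : ℝ) : ℝ := 1 / π * (y / (u ^ 2 + y ^ 2))

section ExpNegAbs

variable {b : ℝ}

lemma integrable_exp_neg_mul_abs (hb : 0 < b) : Integrable fun ξ : ℝ => rexp (-b * |ξ|) := by
  have hIic : IntegrableOn (fun ξ : ℝ => rexp (-b * |ξ|)) (Iic 0) :=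
    (integrableOn_exp_mul_Iic hb 0).congr_fun
      (fun ξ (hξ : ξ ≤ 0) => by simp [abs_of_nonpos hξ]) measurableSet_Iic
  have hIoi : IntegrableOn (fun ξ : ℝ => rexp (-b * |ξ|)) (Ioi 0) :=
    (integrableOn_exp_mul_Ioi (neg_neg_of_pos hb) 0).congr_fun
      (fun ξ (hξ : 0 < ξ) => by simp [abs_of_pos hξ]) measurableSet_Ioi
  simpa [Iic_union_Ioi] using hIic.union hIoi

lemma integrable_cexp_mul_I_sub_mul_abs (hb : 0 < b) (t : ℝ) :
    Integrable fun ξ : ℝ => cexp (t * ξ * I - b * |ξ|) :=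
  (integrable_exp_neg_mul_abs hb).mono' (by fun_prop)
    (.of_forall fun ξ => by simp [Complex.norm_exp])

lemma integral_cexp_mul_I_sub_mul_abs (hb : 0 < b) (t : ℝ) :
    ∫ ξ : ℝ, cexp (t * ξ * I - b * |ξ|) = 2 * b / (t ^ 2 + b ^ 2) := by
  have hint := integrable_cexp_mul_I_sub_mul_abs hb t
  rw [← intervalIntegral.integral_Iic_add_Ioi hint.integrableOn hint.integrableOn,
    setIntegral_congr_fun measurableSet_Iic (g := fun ξ : ℝ => cexp ((b + t * I) * ξ))
      (fun ξ (hξ : ξ ≤ 0) => by simp only [abs_of_nonpos hξ]; push_cast; ring_nf),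
    setIntegral_congr_fun measurableSet_Ioi (g := fun ξ : ℝ => cexp ((-b + t * I) * ξ))
      (fun ξ (hξ : 0 < ξ) => by simp only [abs_of_pos hξ]; ring_nf),
    integral_exp_mul_complex_Iic (by simpa using hb),
    integral_exp_mul_complex_Ioi (by simpa using hb)]
  have h₁ : (b : ℂ) + t * I ≠ 0 := fun h => by simpa [hb.ne'] using congrArg re h
  have h₂ : -(b : ℂ) + t * I ≠ 0 := fun h => by simpa [hb.ne'] using congrArg re h
  have h₃ : (t : ℂ) ^ 2 + b ^ 2 ≠ 0 := by exact_mod_cast (by positivity : t ^ 2 + b ^ 2 ≠ 0)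
  simp only [Complex.ofReal_zero, mul_zero, Complex.exp_zero]
  field_simp
  linear_combination (-2 * b * t ^ 2 : ℂ) * I_sq

end ExpNegAbs

lemma integral_fourier_mul_eq_integral_mul_fourier {f g : ℝ → ℂ} (hf : Integrable f)
    (hg : Integrable g) : ∫ ξ, 𝓕 f ξ * g ξ = ∫ t, f t * 𝓕 g t := by
  have h := VectorFourier.integral_fourierIntegral_smul_eq_flip (L := innerₗ ℝ)
    Real.continuous_fourierChar continuous_inner hf hg
  rw [flip_innerₗ] at h
  exact h

lemma fourier_real_eq_integral_mul_cexp (f : ℝ → ℂ) (ξ : ℝ) :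
    𝓕 f ξ = ∫ x, f x * cexp (-(2 * π * I * ξ * x)) := by
  rw [Real.fourier_real_eq_integral_exp_smul]
  refine integral_congr_ae (.of_forall fun x => ?_)
  simp only [smul_eq_mul, mul_comm (f x)]
  push_cast
  ring_nf

lemma fourier_cexp_sub_mul_abs_eq_halfPlanePoissonKernel {y : ℝ} (hy : 0 < y) (x t : ℝ) :
    𝓕 (fun ξ : ℝ => cexp (2 * π * x * ξ * I - 2 * π * y * |ξ|)) t =
      halfPlanePoissonKernel y (x - t) := by
  calc _ = ∫ ξ : ℝ, cexp ((2 * π * (x - t) : ℝ) * ξ * I - (2 * π * y : ℝ) * |ξ|) := by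
        rw [Real.fourier_real_eq_integral_exp_smul]
        refine integral_congr_ae (.of_forall fun ξ => ?_)
        simp only [smul_eq_mul, ← Complex.exp_add]
        congr 1
        push_cast
        ring
    _ = _ := by
        rw [integral_cexp_mul_I_sub_mul_abs (by positivity), halfPlanePoissonKernel]
        push_cast
        field_simp

theorem upper_integral_eq_poisson_general (f : ℝ → ℂ) (hi : Integrable f)
    (fhat : ℝ → ℂ)
    (hfhat : ∀ ξ, fhat ξ = ∫ x, f x * Complex.exp (-(2 * π * Complex.I * ξ * x)))
    (hsupp : ∀ ξ < (0 : ℝ), fhat ξ = 0) (x y : ℝ) (hy : 0 < y) :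
    ∫ ξ in Set.Ioi (0 : ℝ),
        fhat ξ * Complex.exp (2 * π * Complex.I * (x + Complex.I * y) * ξ) =
      ∫ u : ℝ, ((1 / π) * (y / (u ^ 2 + y ^ 2)) : ℝ) * f (x - u) := by
  set g : ℝ → ℂ := fun ξ => cexp (2 * π * x * ξ * I - 2 * π * y * |ξ|)
  have hfhat_eq : fhat = 𝓕 f := funext fun ξ => by rw [hfhat, fourier_real_eq_integral_mul_cexp]
  have hg : Integrable g := by
    refine (integrable_cexp_mul_I_sub_mul_abs (b := 2 * π * y) (by positivity) (2 * π * x)).congr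
      (.of_forall fun ξ => ?_)
    simp only [g]
    push_cast
    ring_nf
  calc _ = ∫ ξ in Ioi 0, fhat ξ * g ξ := setIntegral_congr_fun measurableSet_Ioi fun ξ hξ => by
          simp only [g, abs_of_pos (mem_Ioi.mp hξ)]
          congr 2
          linear_combination (2 * π * y * ξ : ℂ) * I_sq
    _ = ∫ ξ in Ici 0, fhat ξ * g ξ := integral_Ici_eq_integral_Ioi.symm
    _ = ∫ ξ, fhat ξ * g ξ := setIntegral_eq_integral_of_forall_compl_eq_zero fun ξ hξ => by
          rw [hsupp ξ (not_le.mp hξ), zero_mul]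
    _ = ∫ t, f t * halfPlanePoissonKernel y (x - t) := by
          simp only [hfhat_eq, integral_fourier_mul_eq_integral_mul_fourier hi hg, g,
            fourier_cexp_sub_mul_abs_eq_halfPlanePoissonKernel hy]
    _ = _ := by
          rw [← integral_sub_left_eq_self _ volume x]
          simp only [sub_sub_cancel, halfPlanePoissonKernel, mul_comm]

theorem upper_integral_eq_poisson (f : ℝ → ℂ) (hc : Continuous f) (hi : Integrable f)
    (fhat : ℝ → ℂ)
    (hfhat : ∀ ξ, fhat ξ = ∫ x, f x * Complex.exp (-(2 * π * Complex.I * ξ * x)))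
    (hsupp : ∀ ξ < (0 : ℝ), fhat ξ = 0) (x y : ℝ) (hy : 0 < y) :
    ∫ ξ in Set.Ioi (0 : ℝ),
        fhat ξ * Complex.exp (2 * π * Complex.I * (x + Complex.I * y) * ξ) =
      ∫ u : ℝ, ((1 / π) * (y / (u ^ 2 + y ^ 2)) : ℝ) * f (x - u) :=
  upper_integral_eq_poisson_general f hi fhat hfhat hsupp x y hy
end

section
/- Let f : ℝ → ℂ be continuous and integrable with f̂ supported in a compact interval [a,b]. Then F(z) = ∫_a^b f̂(ξ) exp(2πi z ξ) dξ defines an entire holomorphic function on ℂ, and F(x) = f(x) for real x. -/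
open Real MeasureTheory Complex intervalIntegral

open scoped FourierTransform

/-!
The hypothesis says `fhat = 𝓕 f`. Since `f` is integrable, `𝓕 f` is continuous, hence integrable
as it vanishes off `[a, b]`; Fourier inversion then gives `f x = ∫ 𝓕 f ξ e^{2πixξ} dξ`, and the
integral may be restricted to `[a, b]`. Replacing `x` by `z ∈ ℂ` gives an entire function because
the integrand is entire in `z` and, on a compact `ξ`-interval, its `z`-derivative is locally
bounded, so one may differentiate under the integral sign.
-/

theorem integral_mul_cexp_neg_eq_fourier (f : ℝ → ℂ) (ξ : ℝ) :
    ∫ x, f x * cexp (-(2 * π * I * ξ * x)) = 𝓕 f ξ := by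
  rw [Real.fourier_real_eq_integral_exp_smul]
  congr 1 with x
  rw [smul_eq_mul, mul_comm]
  push_cast
  ring_nf

theorem integral_mul_cexp_eq_fourierInv (g : ℝ → ℂ) (x : ℝ) :
    ∫ ξ, g ξ * cexp (2 * π * I * x * ξ) = 𝓕⁻ g x := by
  rw [Real.fourierInv_eq']
  congr 1 with ξ
  simp only [smul_eq_mul, RCLike.inner_apply, starRingEnd_apply, star_trivial]
  rw [mul_comm]
  push_cast
  ring_nf

theorem MeasureTheory.Integrable.continuous_fourier {V E : Type*} [NormedAddCommGroup V]
    [InnerProductSpace ℝ V] [MeasurableSpace V] [BorelSpace V] [FiniteDimensional ℝ V]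
    [NormedAddCommGroup E] [NormedSpace ℂ E] {f : V → E} (hf : Integrable f) :
    Continuous (𝓕 f) :=
  VectorFourier.fourierIntegral_continuous Real.continuous_fourierChar (innerSL ℝ).continuous₂ hf

theorem intervalIntegral_eq_integral_of_forall_notMem_Icc {E : Type*} [NormedAddCommGroup E]
    [NormedSpace ℝ E] {g : ℝ → E} {a b : ℝ} (hab : a ≤ b) (hg : ∀ x ∉ Set.Icc a b, g x = 0) :
    ∫ x in a..b, g x = ∫ x, g x := by
  rw [integral_of_le hab, ← integral_Icc_eq_integral_Ioc,
    setIntegral_eq_integral_of_forall_compl_eq_zero hg]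

theorem differentiable_intervalIntegral_mul_cexp {g : ℝ → ℂ} {a b : ℝ}
    (hg : IntervalIntegrable g volume a b) (c : ℂ) :
    Differentiable ℂ fun z : ℂ => ∫ ξ in a..b, g ξ * cexp (c * z * ξ) := by
  intro z₀
  obtain ⟨C, hC⟩ : ∃ C, ∀ p ∈ Metric.closedBall z₀ 1 ×ˢ Set.uIcc a b,
      ‖cexp (c * p.1 * p.2) * (c * p.2)‖ ≤ C :=
    ((isCompact_closedBall z₀ 1).prod isCompact_uIcc).exists_bound_of_continuousOn
      (by fun_prop)
  have hderiv (ξ : ℝ) (z : ℂ) : HasDerivAt (fun z => g ξ * cexp (c * z * ξ))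
      (g ξ * (cexp (c * z * ξ) * (c * ξ))) z := by
    simpa using (((hasDerivAt_id z).const_mul c).mul_const (ξ : ℂ)).cexp.const_mul (g ξ)
  have hmeas (z : ℂ) : AEStronglyMeasurable (fun ξ : ℝ => g ξ * cexp (c * z * ξ))
      (volume.restrict (Set.uIoc a b)) :=
    hg.def'.aestronglyMeasurable.mul
      (by fun_prop : Continuous fun ξ : ℝ => cexp (c * z * ξ)).aestronglyMeasurable
  refine (hasDerivAt_integral_of_dominated_loc_of_deriv_le (bound := fun ξ => ‖g ξ‖ * C)
    (Metric.closedBall_mem_nhds z₀ one_pos) (.of_forall hmeas) ?_ ?_ ?_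
    (hg.norm.mul_const C) (ae_of_all _ fun ξ _ z _ => hderiv ξ z)).2.differentiableAt
  · exact hg.mul_continuousOn (by fun_prop)
  · exact hg.def'.aestronglyMeasurable.mul
      (by fun_prop : Continuous fun ξ : ℝ => cexp (c * z₀ * ξ) * (c * ξ)).aestronglyMeasurable
  · refine ae_of_all _ fun ξ hξ z hz => ?_
    rw [norm_mul]
    exact mul_le_mul_of_nonneg_left (hC (z, ξ) ⟨hz, Set.uIoc_subset_uIcc hξ⟩) (norm_nonneg _)

theorem entire_of_compactly_supported_fourier (f : ℝ → ℂ) (hc : Continuous f)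
    (hi : Integrable f) (a b : ℝ) (hab : a ≤ b) (fhat : ℝ → ℂ)
    (hfhat : ∀ ξ, fhat ξ = ∫ x, f x * Complex.exp (-(2 * π * Complex.I * ξ * x)))
    (hsupp : ∀ ξ : ℝ, ξ ∉ Set.Icc a b → fhat ξ = 0) :
    Differentiable ℂ
      (fun z : ℂ => ∫ ξ in a..b, fhat ξ * Complex.exp (2 * π * Complex.I * z * ξ)) ∧
      ∀ x : ℝ, (∫ ξ in a..b, fhat ξ * Complex.exp (2 * π * Complex.I * (x : ℂ) * ξ)) = f x := by
  have hfhat_eq : fhat = 𝓕 f :=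
    funext fun ξ => (hfhat ξ).trans (integral_mul_cexp_neg_eq_fourier f ξ)
  have hfhat_cont : Continuous fhat := hfhat_eq ▸ hi.continuous_fourier
  refine ⟨differentiable_intervalIntegral_mul_cexp (hfhat_cont.intervalIntegrable a b) _,
    fun x => ?_⟩
  have hfhat_int : Integrable (𝓕 f) :=
    hfhat_eq ▸ hfhat_cont.integrable_of_hasCompactSupport (.intro isCompact_Icc hsupp)
  rw [intervalIntegral_eq_integral_of_forall_notMem_Icc hab
      fun ξ hξ => by rw [hsupp ξ hξ, zero_mul],
    integral_mul_cexp_eq_fourierInv, hfhat_eq]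
  exact hi.fourierInv_fourier_eq hfhat_int hc.continuousAt
end

section
/- Phragmén–Lindelöf growth bound: let f be an entire function and σ > 0 such that for every ε > 0 there exists A_ε > 0 with |f(z)| ≤ A_ε exp((σ+ε)|z|) for all z ∈ ℂ, and suppose |f(x)| ≤ B for all real x. Then |f(x + iy)| ≤ B exp(σ|y|) for all real x, y. -/
/-!
Rotating by `I` turns the Phragmén–Lindelöf principle for the right half-plane into one for the
upper half-plane: an entire function of exponential type that is bounded on the positive imaginary
axis is bounded in the closed upper half-plane by its bound on the real axis. If `f` has type `τ`,
then `exp (τ * I * z) • f z` has norm `exp (-τ * z.im) * ‖f z‖`, so it is bounded on the positive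
imaginary axis and agrees in norm with `f` on the real axis; this gives
`‖f z‖ ≤ B * exp (τ * z.im)` for `0 ≤ z.im`. Letting `τ = σ + ε` decrease to `σ`, and replacing
`f` by `f ∘ Neg.neg` in the lower half-plane, yields the theorem.
-/

open Real Complex

open Filter Asymptotics Topology

variable {E : Type*} [NormedAddCommGroup E] [NormedSpace ℂ E]

theorem PhragmenLindelof.upper_half_plane_of_bounded_on_imag {g : ℂ → E}
    (hd : Differentiable ℂ g) {A τ C : ℝ} (hgrowth : ∀ z, ‖g z‖ ≤ A * Real.exp (τ * ‖z‖))
    (hbdd : IsBoundedUnder (· ≤ ·) atTop fun t : ℝ => ‖g (t * I)‖)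
    (hreal : ∀ x : ℝ, ‖g x‖ ≤ C) {z : ℂ} (hz : 0 ≤ z.im) : ‖g z‖ ≤ C := by
  have hrot := PhragmenLindelof.right_half_plane_of_bounded_on_real (f := fun w => g (I * w))
    (C := C) (z := -I * z) (hd.comp (differentiable_id.const_mul I)).diffContOnCl ?_ ?_ ?_
    (by simpa)
  · simpa [← mul_assoc] using hrot
  · refine ⟨1, by norm_num, τ, (isBigO_of_le' (c := A) _ fun w => ?_).mono inf_le_left⟩
    simpa using hgrowth (I * w)
  · simpa only [mul_comm I] using hbdd
  · intro x
    simpa [mul_left_comm I] using hreal (-x)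

theorem norm_le_mul_exp_im_of_exponential_type {f : ℂ → E} (hd : Differentiable ℂ f)
    {A τ B : ℝ} (hgrowth : ∀ z, ‖f z‖ ≤ A * Real.exp (τ * ‖z‖))
    (hreal : ∀ x : ℝ, ‖f x‖ ≤ B) {z : ℂ} (hz : 0 ≤ z.im) :
    ‖f z‖ ≤ B * Real.exp (τ * z.im) := by
  set g : ℂ → E := fun w => Complex.exp (τ * I * w) • f w
  have hnorm : ∀ w, ‖g w‖ = Real.exp (-τ * w.im) * ‖f w‖ := fun w => by
    simp [g, norm_smul, Complex.norm_exp]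
  have hA : 0 ≤ A := nonneg_of_mul_nonneg_left ((norm_nonneg _).trans (hgrowth 0)) (exp_pos _)
  have hg : ‖g z‖ ≤ B := by
    refine PhragmenLindelof.upper_half_plane_of_bounded_on_imag (A := A) (τ := 2 * |τ|) ?_
      (fun w => ?_) ?_ (fun x => ?_) hz
    · exact (Complex.differentiable_exp.comp (differentiable_id.const_mul _)).smul hd
    · have hexp : -τ * w.im + τ * ‖w‖ ≤ 2 * |τ| * ‖w‖ := by
        have him : -τ * w.im ≤ |τ| * ‖w‖ :=
          calc -τ * w.im ≤ |τ| * |w.im| := by rw [neg_mul, ← abs_mul]; exact neg_le_abs _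
            _ ≤ |τ| * ‖w‖ := by gcongr; exact abs_im_le_norm w
        have hτ : τ * ‖w‖ ≤ |τ| * ‖w‖ := by gcongr; exact le_abs_self τ
        linarith
      calc ‖g w‖ ≤ Real.exp (-τ * w.im) * (A * Real.exp (τ * ‖w‖)) := by
            rw [hnorm]; gcongr; exact hgrowth w
        _ = A * Real.exp (-τ * w.im + τ * ‖w‖) := by rw [Real.exp_add]; ring
        _ ≤ A * Real.exp (2 * |τ| * ‖w‖) := by gcongr
    · refine isBoundedUnder_of_eventually_le (a := A) ?_
      filter_upwards [eventually_ge_atTop 0] with t ht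
      calc ‖g (t * I)‖ ≤ Real.exp (-τ * t) * (A * Real.exp (τ * t)) := by
            simpa [hnorm, abs_of_nonneg ht] using
              mul_le_mul_of_nonneg_left (hgrowth (t * I)) (exp_pos (-τ * t)).le
        _ = A := by rw [mul_left_comm, ← Real.exp_add]; simp
    · simpa [hnorm] using hreal x
  rw [hnorm, neg_mul, Real.exp_neg, ← div_eq_inv_mul, div_le_iff₀ (exp_pos _)] at hg
  exact hg

theorem norm_le_mul_exp_im_of_forall_exponential_type {f : ℂ → E} (hd : Differentiable ℂ f)
    {σ B : ℝ} (hgrowth : ∀ ε > (0 : ℝ), ∃ A, ∀ z, ‖f z‖ ≤ A * Real.exp ((σ + ε) * ‖z‖))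
    (hreal : ∀ x : ℝ, ‖f x‖ ≤ B) {z : ℂ} (hz : 0 ≤ z.im) :
    ‖f z‖ ≤ B * Real.exp (σ * z.im) := by
  refine ge_of_tendsto (f := fun ε => B * Real.exp ((σ + ε) * z.im)) (x := 𝓝[>] 0) ?_ ?_
  · exact (Continuous.tendsto' (by fun_prop) 0 _ (by simp)).mono_left nhdsWithin_le_nhds
  · filter_upwards [self_mem_nhdsWithin] with ε hε
    obtain ⟨A, hA⟩ := hgrowth ε hε
    exact norm_le_mul_exp_im_of_exponential_type hd hA hreal hz

theorem norm_le_mul_exp_abs_im_of_forall_exponential_type {f : ℂ → E} (hd : Differentiable ℂ f)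
    {σ B : ℝ} (hgrowth : ∀ ε > (0 : ℝ), ∃ A, ∀ z, ‖f z‖ ≤ A * Real.exp ((σ + ε) * ‖z‖))
    (hreal : ∀ x : ℝ, ‖f x‖ ≤ B) (z : ℂ) :
    ‖f z‖ ≤ B * Real.exp (σ * |z.im|) := by
  rcases le_total 0 z.im with hz | hz
  · rw [abs_of_nonneg hz]
    exact norm_le_mul_exp_im_of_forall_exponential_type hd hgrowth hreal hz
  · have hneg := norm_le_mul_exp_im_of_forall_exponential_type (f := fun w => f (-w))
      (hd.comp differentiable_neg)
      (fun ε hε => (hgrowth ε hε).imp fun A hA w => by simpa using hA (-w))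
      (fun x => by simpa using hreal (-x)) (z := -z) (by simpa)
    simpa [abs_of_nonpos hz] using hneg

theorem phragmen_lindelof_entire_general (f : ℂ → ℂ) (hf : Differentiable ℂ f)
    (σ : ℝ) (B : ℝ)
    (hgrowth : ∀ ε > (0 : ℝ), ∃ A > (0 : ℝ), ∀ z : ℂ, ‖f z‖ ≤ A * Real.exp ((σ + ε) * ‖z‖))
    (hreal : ∀ x : ℝ, ‖f x‖ ≤ B) :
    ∀ x y : ℝ, ‖f (x + y * Complex.I)‖ ≤ B * Real.exp (σ * |y|) := by
  intro x y
  simpa using norm_le_mul_exp_abs_im_of_forall_exponential_type hf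
    (fun ε hε => (hgrowth ε hε).imp fun _ hA => hA.2) hreal (x + y * I)

theorem phragmen_lindelof_entire (f : ℂ → ℂ) (hf : Differentiable ℂ f)
    (σ : ℝ) (hσ : 0 < σ) (B : ℝ) (hB : 0 < B)
    (hgrowth : ∀ ε > (0 : ℝ), ∃ A > (0 : ℝ), ∀ z : ℂ, ‖f z‖ ≤ A * Real.exp ((σ + ε) * ‖z‖))
    (hreal : ∀ x : ℝ, ‖f x‖ ≤ B) :
    ∀ x y : ℝ, ‖f (x + y * Complex.I)‖ ≤ B * Real.exp (σ * |y|) :=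
  phragmen_lindelof_entire_general f hf σ B hgrowth hreal
end

section
/- Phragmén–Lindelöf on the upper half-plane: let f be continuous on the closed upper half-plane and holomorphic on the open upper half-plane, with |f(x)| ≤ B for all real x, and suppose for every ε > 0 there exists A_ε with |f(z)| ≤ A_ε exp((σ+ε)|z|) for Im z ≥ 0. Then |f(x + iy)| ≤ B exp(σ y) for all y ≥ 0. -/
open Real Complex

/-!
Multiplying `f` by `exp (i τ z)`, whose modulus is `exp (-τ Im z)`, produces for `τ` above the
exponential type a function still bounded by `B` on `ℝ`, of order one in the upper half-plane and
bounded along the positive imaginary axis. Phragmén–Lindelöf in the half-plane bounds it by `B`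
everywhere, i.e. `|f z| ≤ B exp (τ Im z)`, and we let `τ ↓ σ`.
-/

open Set Filter Asymptotics Bornology Topology

theorem norm_cexp_I_mul_ofReal_mul (τ : ℝ) (z : ℂ) : ‖cexp (I * τ * z)‖ = Real.exp (-τ * z.im) := by
  simp only [norm_exp, mul_re, mul_im, I_re, I_im, ofReal_re, ofReal_im]
  ring_nf

namespace PhragmenLindelof

variable {E : Type*} [NormedAddCommGroup E] [NormedSpace ℂ E] {f : ℂ → E} {C : ℝ} {z : ℂ}

theorem upper_half_plane_of_bounded_on_imaginary (hd : DiffContOnCl ℂ f {z | 0 < z.im})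
    (hexp : ∃ c < (2 : ℝ), ∃ B,
      f =O[cobounded ℂ ⊓ 𝓟 {z | 0 < z.im}] fun z => Real.exp (B * ‖z‖ ^ c))
    (him : IsBoundedUnder (· ≤ ·) atTop fun t : ℝ => ‖f (t * I)‖) (hre : ∀ x : ℝ, ‖f x‖ ≤ C)
    (hz : 0 ≤ z.im) : ‖f z‖ ≤ C := by
  obtain ⟨w, rfl⟩ : ∃ w, I * w = z := ⟨z / I, mul_div_cancel₀ _ I_ne_zero⟩
  have H : MapsTo (I * ·) {w : ℂ | 0 < w.re} {z | 0 < z.im} := fun w hw => by simpa using hw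
  change ‖(f ∘ (I * ·)) w‖ ≤ C
  rcases hexp with ⟨c, hc, B, hO⟩
  refine right_half_plane_of_bounded_on_real
    (hd.comp (differentiable_id.const_mul I).diffContOnCl H) ⟨c, hc, B, ?_⟩ ?_ (fun y => ?_)
    (by simpa using hz)
  · simpa only [Function.comp_def, norm_mul, norm_I, one_mul]
      using hO.comp_tendsto ((tendsto_mul_left_cobounded I_ne_zero).inf H.tendsto)
  · simpa [mul_comm I] using him
  · have : I * (y * I) = ((-y : ℝ) : ℂ) := by push_cast; ring_nf; simp
    simpa [Function.comp_def, this] using hre (-y)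

theorem norm_le_mul_exp_im_of_exp_type_lt {A τ τ' : ℝ} (hd : DiffContOnCl ℂ f {z | 0 < z.im})
    (hgrowth : ∀ z : ℂ, 0 < z.im → ‖f z‖ ≤ A * Real.exp (τ * ‖z‖)) (hττ' : τ < τ')
    (hre : ∀ x : ℝ, ‖f x‖ ≤ C) (hz : 0 ≤ z.im) : ‖f z‖ ≤ C * Real.exp (τ' * z.im) := by
  set g : ℂ → E := fun z => cexp (I * τ' * z) • f z
  have hg : ∀ z, ‖g z‖ = Real.exp (-τ' * z.im) * ‖f z‖ := fun z => by
    rw [norm_smul, norm_cexp_I_mul_ofReal_mul]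
  have hgd : DiffContOnCl ℂ g {z | 0 < z.im} :=
    ((differentiable_id.const_mul _).cexp.diffContOnCl).smul hd
  have hgrowth_g : ∀ z : ℂ, 0 < z.im → ‖g z‖ ≤ A * Real.exp ((τ + |τ'|) * ‖z‖) := fun z hz => by
    have hdamp : -τ' * z.im ≤ |τ'| * ‖z‖ :=
      calc -τ' * z.im ≤ |-τ' * z.im| := le_abs_self _
        _ = |τ'| * |z.im| := by rw [abs_mul, abs_neg]
        _ ≤ |τ'| * ‖z‖ := by gcongr; exact abs_im_le_norm z
    calc ‖g z‖ ≤ Real.exp (|τ'| * ‖z‖) * (A * Real.exp (τ * ‖z‖)) := by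
          rw [hg]; gcongr; exact hgrowth z hz
      _ = A * Real.exp ((τ + |τ'|) * ‖z‖) := by rw [mul_left_comm, ← Real.exp_add]; ring_nf
  have him : IsBoundedUnder (· ≤ ·) atTop fun t : ℝ => ‖g (t * I)‖ := by
    refine ⟨|A|, eventually_map.2 <| (eventually_gt_atTop 0).mono fun t ht => ?_⟩
    have hf := hgrowth (t * I) (by simpa using ht)
    simp only [norm_mul, norm_I, norm_real, Real.norm_of_nonneg ht.le, mul_one] at hf
    calc ‖g (t * I)‖ ≤ Real.exp (-τ' * t) * (A * Real.exp (τ * t)) := by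
          rw [hg]; simpa using mul_le_mul_of_nonneg_left hf (Real.exp_pos _).le
      _ = A * Real.exp ((τ - τ') * t) := by rw [mul_left_comm, ← Real.exp_add]; ring_nf
      _ ≤ |A| * Real.exp ((τ - τ') * t) := by gcongr; exact le_abs_self A
      _ ≤ |A| := mul_le_of_le_one_right (abs_nonneg A) <|
          Real.exp_le_one_iff.2 (mul_nonpos_of_nonpos_of_nonneg (by linarith) ht.le)
  have hgC : ‖g z‖ ≤ C := by
    refine upper_half_plane_of_bounded_on_imaginary hgd ⟨1, one_lt_two, τ + |τ'|, ?_⟩ him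
      (fun x => ?_) hz
    · refine IsBigO.of_bound A (eventually_inf_principal.2 <| .of_forall fun z hz => ?_)
      simpa [Real.rpow_one] using hgrowth_g z hz
    · simpa [hg] using hre x
  rw [hg, neg_mul, Real.exp_neg, inv_mul_le_iff₀ (Real.exp_pos _)] at hgC
  linarith

theorem norm_le_mul_exp_im_of_exp_type {σ : ℝ} (hd : DiffContOnCl ℂ f {z | 0 < z.im})
    (hgrowth : ∀ τ > σ, ∃ A, ∀ z : ℂ, 0 < z.im → ‖f z‖ ≤ A * Real.exp (τ * ‖z‖))
    (hre : ∀ x : ℝ, ‖f x‖ ≤ C) (hz : 0 ≤ z.im) : ‖f z‖ ≤ C * Real.exp (σ * z.im) := by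
  have hlim : Tendsto (fun τ => C * Real.exp (τ * z.im)) (𝓝[>] σ) (𝓝 (C * Real.exp (σ * z.im))) :=
    ((by fun_prop : Continuous fun τ => C * Real.exp (τ * z.im)).tendsto σ).mono_left
      nhdsWithin_le_nhds
  refine ge_of_tendsto hlim ?_
  filter_upwards [self_mem_nhdsWithin] with τ' hτ'
  obtain ⟨τ, hστ, hττ'⟩ := exists_between (mem_Ioi.1 hτ')
  obtain ⟨A, hA⟩ := hgrowth τ hστ
  exact norm_le_mul_exp_im_of_exp_type_lt hd hA hττ' hre hz

end PhragmenLindelof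

theorem phragmen_lindelof_upper_half_plane_general (f : ℂ → ℂ)
    (hcont : ContinuousOn f {z : ℂ | 0 ≤ z.im})
    (hholo : DifferentiableOn ℂ f {z : ℂ | 0 < z.im})
    (σ : ℝ) (B : ℝ)
    (hgrowth : ∀ ε > (0 : ℝ), ∃ A > (0 : ℝ), ∀ z : ℂ, 0 ≤ z.im →
      ‖f z‖ ≤ A * Real.exp ((σ + ε) * ‖z‖))
    (hreal : ∀ x : ℝ, ‖f x‖ ≤ B) :
    ∀ (x : ℝ) (y : ℝ), 0 ≤ y → ‖f (x + y * Complex.I)‖ ≤ B * Real.exp (σ * y) := by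
  intro x y hy
  have hd : DiffContOnCl ℂ f {z | 0 < z.im} := ⟨hholo, by rwa [closure_setOfPred_lt_im]⟩
  have hexp : ∀ τ > σ, ∃ A, ∀ z : ℂ, 0 < z.im → ‖f z‖ ≤ A * Real.exp (τ * ‖z‖) := fun τ hτ => by
    obtain ⟨A, -, hA⟩ := hgrowth (τ - σ) (sub_pos.2 hτ)
    exact ⟨A, fun z hz => by simpa using hA z hz.le⟩
  simpa using PhragmenLindelof.norm_le_mul_exp_im_of_exp_type hd hexp hreal
    (z := x + y * I) (by simpa using hy)

theorem phragmen_lindelof_upper_half_plane (f : ℂ → ℂ)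
    (hcont : ContinuousOn f {z : ℂ | 0 ≤ z.im})
    (hholo : DifferentiableOn ℂ f {z : ℂ | 0 < z.im})
    (σ : ℝ) (hσ : 0 < σ) (B : ℝ) (hB : 0 < B)
    (hgrowth : ∀ ε > (0 : ℝ), ∃ A > (0 : ℝ), ∀ z : ℂ, 0 ≤ z.im →
      ‖f z‖ ≤ A * Real.exp ((σ + ε) * ‖z‖))
    (hreal : ∀ x : ℝ, ‖f x‖ ≤ B) :
    ∀ (x : ℝ) (y : ℝ), 0 ≤ y → ‖f (x + y * Complex.I)‖ ≤ B * Real.exp (σ * y) :=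
  phragmen_lindelof_upper_half_plane_general f hcont hholo σ B hgrowth hreal
end
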